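/- arXiv:2210.14442 — 5 statements merged into one kernel-verified Lean document; each statement's English description precedes it below -/
import Mathlib

section
/- Let X be a metric space equipped with a Borel measure μ, let r₀ > 0 and r ≥ r₀, and let γ : [0, r] → X be a geodesic segment with γ(0) = p, i.e. dist(γ(s), γ(t)) = |s − t| for all s, t ∈ [0, r]. Suppose that μ(B(q, r₀)) ≥ v for every q ∈ X, where v > 0. Then μ(B(p, r)) ≥ (⌊(r − r₀)/(3r₀)⌋ + 1) · v. In particular the balls B(γ(3r₀·i), r₀) for 0 ≤ i ≤ ⌊(r − r₀)/(3r₀)⌋ are pairwise disjoint and all contained in B(p, r). -/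
open Metric MeasureTheory ENNReal

theorem natCast_mul_le_of_le_floor_div {a b : ℝ} {i : ℕ} (ha : 0 ≤ a) (hb : 0 < b)
    (hi : i ≤ ⌊a / b⌋₊) : b * i ≤ a :=
  (le_div_iff₀' hb).1 ((Nat.le_floor_iff (div_nonneg ha hb.le)).1 hi)

theorem le_abs_mul_natCast_sub_mul_natCast {c : ℝ} {i j : ℕ} (hc : 0 ≤ c) (hij : i ≠ j) :
    c ≤ |c * i - c * j| := by
  have hone : (1 : ℝ) ≤ |(i : ℝ) - j| := by
    exact_mod_cast Int.one_le_abs (sub_ne_zero.2 (Int.natCast_inj.not.2 hij))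
  rw [← mul_sub, abs_mul, abs_of_nonneg hc]
  exact le_mul_of_one_le_right hc hone

theorem card_mul_le_measure_biUnion {α ι : Type*} [MeasurableSpace α] (μ : Measure α)
    {s : Finset ι} {f : ι → Set α} {v : ℝ≥0∞} (hd : (s : Set ι).PairwiseDisjoint f)
    (hm : ∀ i ∈ s, MeasurableSet (f i)) (hv : ∀ i ∈ s, v ≤ μ (f i)) :
    s.card * v ≤ μ (⋃ i ∈ s, f i) := by
  rw [measure_biUnion_finset hd hm, ← nsmul_eq_mul]
  exact Finset.card_nsmul_le_sum s _ v hv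

section Geodesic

variable {X : Type*} [PseudoMetricSpace X] {γ : ℝ → X} {r : ℝ}

theorem ball_subset_ball_of_geodesic
    (hγ : ∀ s ∈ Set.Icc (0 : ℝ) r, ∀ t ∈ Set.Icc (0 : ℝ) r, dist (γ s) (γ t) = |s - t|)
    {t ρ : ℝ} (ht : 0 ≤ t) (hρ : 0 ≤ ρ) (htρ : t + ρ ≤ r) :
    ball (γ t) ρ ⊆ ball (γ 0) r := by
  apply ball_subset_ball'
  rw [hγ t ⟨ht, by linarith⟩ 0 ⟨le_rfl, by linarith⟩, sub_zero, abs_of_nonneg ht]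
  linarith

theorem disjoint_ball_of_geodesic
    (hγ : ∀ s ∈ Set.Icc (0 : ℝ) r, ∀ t ∈ Set.Icc (0 : ℝ) r, dist (γ s) (γ t) = |s - t|)
    {s t ρ : ℝ} (hs : s ∈ Set.Icc 0 r) (ht : t ∈ Set.Icc 0 r) (hst : 2 * ρ ≤ |s - t|) :
    Disjoint (ball (γ s) ρ) (ball (γ t) ρ) :=
  ball_disjoint_ball (by rw [hγ s hs t ht]; linarith)

end Geodesic

theorem volume_lower_bound_along_geodesic_general {X : Type*} [MetricSpace X]
    [MeasurableSpace X] [BorelSpace X] (μ : Measure X)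
    (r₀ r : ℝ) (hr₀ : 0 < r₀) (hr : r₀ ≤ r)
    (γ : ℝ → X) (p : X) (hp : γ 0 = p)
    (hγ : ∀ s ∈ Set.Icc (0 : ℝ) r, ∀ t ∈ Set.Icc (0 : ℝ) r, dist (γ s) (γ t) = |s - t|)
    (v : ℝ≥0∞) (hball : ∀ q : X, v ≤ μ (ball q r₀)) :
    ((⌊(r - r₀) / (3 * r₀)⌋₊ + 1 : ℕ) : ℝ≥0∞) * v ≤ μ (ball p r) ∧
      (∀ i : ℕ, i ≤ ⌊(r - r₀) / (3 * r₀)⌋₊ → ball (γ (3 * r₀ * i)) r₀ ⊆ ball p r) ∧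
      (∀ i j : ℕ, i ≤ ⌊(r - r₀) / (3 * r₀)⌋₊ → j ≤ ⌊(r - r₀) / (3 * r₀)⌋₊ → i ≠ j →
        Disjoint (ball (γ (3 * r₀ * i)) r₀) (ball (γ (3 * r₀ * j)) r₀)) := by
  set N := ⌊(r - r₀) / (3 * r₀)⌋₊
  have hsample : ∀ i ≤ N, 0 ≤ 3 * r₀ * i ∧ 3 * r₀ * i + r₀ ≤ r := fun i hi =>
    ⟨by positivity, by
      linarith [natCast_mul_le_of_le_floor_div (sub_nonneg.2 hr) (by positivity : 0 < 3 * r₀) hi]⟩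
  have hmem : ∀ i ≤ N, 3 * r₀ * i ∈ Set.Icc 0 r := fun i hi =>
    ⟨(hsample i hi).1, by linarith [(hsample i hi).2]⟩
  have hsub : ∀ i ≤ N, ball (γ (3 * r₀ * i)) r₀ ⊆ ball p r := fun i hi =>
    hp ▸ ball_subset_ball_of_geodesic hγ (hsample i hi).1 hr₀.le (hsample i hi).2
  have hdisj : ∀ i j : ℕ, i ≤ N → j ≤ N → i ≠ j →
      Disjoint (ball (γ (3 * r₀ * i)) r₀) (ball (γ (3 * r₀ * j)) r₀) := fun i j hi hj hij =>
    disjoint_ball_of_geodesic hγ (hmem i hi) (hmem j hj) (by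
      linarith [le_abs_mul_natCast_sub_mul_natCast (by positivity : 0 ≤ 3 * r₀) hij])
  refine ⟨?_, hsub, hdisj⟩
  calc ((N + 1 : ℕ) : ℝ≥0∞) * v = (Finset.Iic N).card * v := by rw [Nat.card_Iic]
    _ ≤ μ (⋃ i ∈ Finset.Iic N, ball (γ (3 * r₀ * i)) r₀) :=
        card_mul_le_measure_biUnion μ
          (fun i hi j hj => hdisj i j (Finset.mem_Iic.1 hi) (Finset.mem_Iic.1 hj))
          (fun _ _ => measurableSet_ball) fun _ _ => hball _
    _ ≤ μ (ball p r) := measure_mono (Set.iUnion₂_subset fun i hi => hsub i (Finset.mem_Iic.1 hi))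

/-- Quantitative volume lower bound along a geodesic: disjoint balls of radius `r₀`
spaced `3 r₀` apart along a geodesic from `p` all lie inside `B(p, r)`, so
`μ (B(p,r)) ≥ (⌊(r - r₀)/(3 r₀)⌋ + 1) · v` when all `r₀`-balls have measure at least `v`. -/
theorem volume_lower_bound_along_geodesic {X : Type*} [MetricSpace X]
    [MeasurableSpace X] [BorelSpace X] (μ : Measure X)
    (r₀ r : ℝ) (hr₀ : 0 < r₀) (hr : r₀ ≤ r)
    (γ : ℝ → X) (p : X) (hp : γ 0 = p)
    (hγ : ∀ s ∈ Set.Icc (0 : ℝ) r, ∀ t ∈ Set.Icc (0 : ℝ) r, dist (γ s) (γ t) = |s - t|)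
    (v : ℝ≥0∞) (hv : 0 < v) (hball : ∀ q : X, v ≤ μ (ball q r₀)) :
    ((⌊(r - r₀) / (3 * r₀)⌋₊ + 1 : ℕ) : ℝ≥0∞) * v ≤ μ (ball p r) ∧
      (∀ i : ℕ, i ≤ ⌊(r - r₀) / (3 * r₀)⌋₊ → ball (γ (3 * r₀ * i)) r₀ ⊆ ball p r) ∧
      (∀ i j : ℕ, i ≤ ⌊(r - r₀) / (3 * r₀)⌋₊ → j ≤ ⌊(r - r₀) / (3 * r₀)⌋₊ → i ≠ j →
        Disjoint (ball (γ (3 * r₀ * i)) r₀) (ball (γ (3 * r₀ * j)) r₀)) :=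
  volume_lower_bound_along_geodesic_general μ r₀ r hr₀ hr γ p hp hγ v hball
end

section
/- Let X be a metric space equipped with a Borel measure μ. Assume: (i) X is a geodesic space, i.e. for all p, q ∈ X there exists a map γ : [0, dist(p,q)] → X with γ(0) = p, γ(dist(p,q)) = q and dist(γ(s), γ(t)) = |s − t| for all s, t; (ii) X is unbounded, i.e. for every p ∈ X and every r > 0 there exists q ∈ X with dist(p, q) ≥ r; (iii) there exist r₀ > 0 and v > 0 such that μ(B(q, r₀)) ≥ v for every q ∈ X. Then for every p ∈ X, liminf_{r → ∞} μ(B(p, r))/r ≥ v/(3r₀). -/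
/-!
Follow a geodesic segment of length `r` from `p` and place centres at distances
`0, 2r₀, 4r₀, …` along it. The balls of radius `r₀` around them are pairwise disjoint and
lie in `B(p, r)`, and there are about `r / (2r₀)` of them, so `μ(B(p, r)) ≳ v r / (2r₀)`.
This even gives the constant `v / (2r₀)` in place of `v / (3r₀)`.
-/

open Metric MeasureTheory ENNReal Filter

section

variable {X : Type*} [MetricSpace X]

theorem exists_isometric_segment_of_geodesic
    (hgeo : ∀ p q : X, ∃ γ : ℝ → X, γ 0 = p ∧ γ (dist p q) = q ∧
      ∀ s ∈ Set.Icc (0 : ℝ) (dist p q), ∀ t ∈ Set.Icc (0 : ℝ) (dist p q),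
        dist (γ s) (γ t) = |s - t|)
    (hunbdd : ∀ p : X, ∀ r : ℝ, ∃ q : X, r ≤ dist p q) (p : X) (r : ℝ) :
    ∃ γ : ℝ → X, γ 0 = p ∧
      ∀ s ∈ Set.Icc (0 : ℝ) r, ∀ t ∈ Set.Icc (0 : ℝ) r, dist (γ s) (γ t) = |s - t| := by
  obtain ⟨q, hq⟩ := hunbdd p r
  obtain ⟨γ, hγ0, -, hγ⟩ := hgeo p q
  have hsub : Set.Icc 0 r ⊆ Set.Icc 0 (dist p q) := Set.Icc_subset_Icc_right hq
  exact ⟨γ, hγ0, fun s hs t ht => hγ s (hsub hs) t (hsub ht)⟩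

theorem one_le_abs_natCast_sub_natCast {i j : ℕ} (hij : i ≠ j) : (1 : ℝ) ≤ |(i : ℝ) - j| := by
  have h : (1 : ℤ) ≤ |(i : ℤ) - j| := Int.one_le_abs (sub_ne_zero.2 (by exact_mod_cast hij))
  exact_mod_cast h

variable [MeasurableSpace X] [OpensMeasurableSpace X] {μ : Measure X}

theorem natCast_mul_le_measure_ball {γ : ℝ → X} {p : X} {r r₀ : ℝ} {m : ℝ≥0∞}
    (hr₀ : 0 < r₀) (hγ0 : γ 0 = p)
    (hγ : ∀ s ∈ Set.Icc (0 : ℝ) r, ∀ t ∈ Set.Icc (0 : ℝ) r, dist (γ s) (γ t) = |s - t|)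
    (hball : ∀ q, m ≤ μ (ball q r₀)) {n : ℕ} (hn : 2 * r₀ * n ≤ r + r₀) :
    n * m ≤ μ (ball p r) := by
  have hcenter : ∀ i ∈ Finset.range n, 2 * r₀ * i + r₀ ≤ r := by
    intro i hi
    have : (i : ℝ) + 1 ≤ n := by exact_mod_cast Finset.mem_range.1 hi
    nlinarith
  have hmem : ∀ i ∈ Finset.range n, 2 * r₀ * i ∈ Set.Icc 0 r := fun i hi =>
    ⟨by positivity, by linarith [hcenter i hi]⟩
  have hdisj : (Finset.range n : Set ℕ).PairwiseDisjoint fun i => ball (γ (2 * r₀ * i)) r₀ := by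
    intro i hi j hj hij
    refine ball_disjoint_ball ?_
    rw [hγ _ (hmem i hi) _ (hmem j hj), ← mul_sub, abs_mul, abs_of_pos (by positivity)]
    nlinarith [one_le_abs_natCast_sub_natCast hij]
  have hsub : ∀ i ∈ Finset.range n, ball (γ (2 * r₀ * i)) r₀ ⊆ ball p r := by
    intro i hi
    refine ball_subset_ball' ?_
    rw [← hγ0, hγ _ (hmem i hi) _ ⟨le_rfl, (hmem i hi).1.trans (hmem i hi).2⟩]
    rw [sub_zero, abs_of_nonneg (by positivity)]
    linarith [hcenter i hi]
  calc (n : ℝ≥0∞) * m = ∑ _i ∈ Finset.range n, m := by simp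
    _ ≤ ∑ i ∈ Finset.range n, μ (ball (γ (2 * r₀ * i)) r₀) :=
      Finset.sum_le_sum fun i _ => hball _
    _ = μ (⋃ i ∈ Finset.range n, ball (γ (2 * r₀ * i)) r₀) :=
      (measure_biUnion_finset hdisj fun i _ => measurableSet_ball).symm
    _ ≤ μ (ball p r) := measure_mono (Set.iUnion₂_subset hsub)

variable {p : X} {r₀ v : ℝ}

theorem ofReal_sub_le_measure_ball_div (hr₀ : 0 < r₀) (hv : 0 ≤ v)
    (hseg : ∀ r : ℝ, ∃ γ : ℝ → X, γ 0 = p ∧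
      ∀ s ∈ Set.Icc (0 : ℝ) r, ∀ t ∈ Set.Icc (0 : ℝ) r, dist (γ s) (γ t) = |s - t|)
    (hball : ∀ q : X, ENNReal.ofReal v ≤ μ (ball q r₀)) {r : ℝ} (hr : 0 < r) :
    ENNReal.ofReal (v / (2 * r₀) - v / (2 * r)) ≤ μ (ball p r) / ENNReal.ofReal r := by
  obtain ⟨γ, hγ0, hγ⟩ := hseg r
  set n := ⌊(r + r₀) / (2 * r₀)⌋₊
  have hn : 2 * r₀ * n ≤ r + r₀ :=
    (le_div_iff₀' (by positivity)).1 (Nat.floor_le (by positivity))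
  have hn' : (r + r₀) / (2 * r₀) < n + 1 := Nat.lt_floor_add_one _
  have hvn : v / (2 * r₀) - v / (2 * r) ≤ n * v / r := by
    rw [div_lt_iff₀ (by positivity)] at hn'
    rw [le_div_iff₀ hr]
    field_simp
    nlinarith
  calc ENNReal.ofReal (v / (2 * r₀) - v / (2 * r)) ≤ ENNReal.ofReal (n * v / r) :=
        ENNReal.ofReal_le_ofReal hvn
    _ = n * ENNReal.ofReal v / ENNReal.ofReal r := by
      rw [ENNReal.ofReal_div_of_pos hr, ENNReal.ofReal_mul (Nat.cast_nonneg _),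
        ENNReal.ofReal_natCast]
    _ ≤ μ (ball p r) / ENNReal.ofReal r := by
      gcongr
      exact natCast_mul_le_measure_ball hr₀ hγ0 hγ hball hn

theorem ofReal_div_le_liminf_measure_ball_div (hr₀ : 0 < r₀) (hv : 0 ≤ v)
    (hseg : ∀ r : ℝ, ∃ γ : ℝ → X, γ 0 = p ∧
      ∀ s ∈ Set.Icc (0 : ℝ) r, ∀ t ∈ Set.Icc (0 : ℝ) r, dist (γ s) (γ t) = |s - t|)
    (hball : ∀ q : X, ENNReal.ofReal v ≤ μ (ball q r₀)) :
    ENNReal.ofReal (v / (2 * r₀)) ≤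
      liminf (fun r : ℝ => μ (ball p r) / ENNReal.ofReal r) atTop := by
  have hlim : Tendsto (fun r : ℝ => ENNReal.ofReal (v / (2 * r₀) - v / (2 * r))) atTop
      (nhds (ENNReal.ofReal (v / (2 * r₀)))) := by
    refine ENNReal.tendsto_ofReal ?_
    simpa using tendsto_const_nhds.sub
      (tendsto_const_nhds.div_atTop (tendsto_id.const_mul_atTop (two_pos : (0 : ℝ) < 2)))
  calc ENNReal.ofReal (v / (2 * r₀))
      = liminf (fun r : ℝ => ENNReal.ofReal (v / (2 * r₀) - v / (2 * r))) atTop :=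
        hlim.liminf_eq.symm
    _ ≤ liminf (fun r : ℝ => μ (ball p r) / ENNReal.ofReal r) atTop :=
      liminf_le_liminf <| (eventually_gt_atTop 0).mono fun _ hr =>
        ofReal_sub_le_measure_ball_div hr₀ hv hseg hball hr

end

/-- A geodesic, unbounded metric measure space in which every ball of radius `r₀` has
measure at least `v` has at least linear volume growth: for every `p`,
`liminf_{r → ∞} μ(B(p,r))/r ≥ v/(3 r₀)`. -/
theorem linear_volume_growth {X : Type*} [MetricSpace X]
    [MeasurableSpace X] [BorelSpace X] (μ : Measure X)
    (hgeo : ∀ p q : X, ∃ γ : ℝ → X, γ 0 = p ∧ γ (dist p q) = q ∧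
      ∀ s ∈ Set.Icc (0 : ℝ) (dist p q), ∀ t ∈ Set.Icc (0 : ℝ) (dist p q),
        dist (γ s) (γ t) = |s - t|)
    (hunbdd : ∀ p : X, ∀ r : ℝ, ∃ q : X, r ≤ dist p q)
    (r₀ v : ℝ) (hr₀ : 0 < r₀) (hv : 0 < v)
    (hball : ∀ q : X, ENNReal.ofReal v ≤ μ (ball q r₀)) (p : X) :
    ENNReal.ofReal (v / (3 * r₀)) ≤
      liminf (fun r : ℝ => μ (ball p r) / ENNReal.ofReal r) atTop :=
  calc ENNReal.ofReal (v / (3 * r₀)) ≤ ENNReal.ofReal (v / (2 * r₀)) := by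
        gcongr; norm_num
    _ ≤ liminf (fun r : ℝ => μ (ball p r) / ENNReal.ofReal r) atTop :=
      ofReal_div_le_liminf_measure_ball_div hr₀ hv.le
        (exists_isometric_segment_of_geodesic hgeo hunbdd p) hball
end

section
/- Fix R₀ > 0 and define ρ : ℝ → ℝ by ρ(x) = (3/(8R₀⁵))·x⁴ − (5/(4R₀³))·x² + 15/(8R₀) for |x| ≤ R₀, and ρ(x) = 1/|x| for |x| ≥ R₀. Then ρ is twice continuously differentiable on ℝ (of class C²) and ρ(x) > 0 for every x ∈ ℝ. -/
/-!
Gluing `Cⁿ` functions at a point where their derivatives up to order `n` agree gives a `Cⁿ`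
function. On `x > 0`, `ρ` is the gluing at `R₀` of the quartic and `x ↦ x⁻¹`, whose values and
first two derivatives at `R₀` are `1/R₀`, `-1/R₀²`, `2/R₀³`; since `ρ` is even and equals the
quartic near `0`, it is `C²` everywhere. Positivity: the quartic `q` satisfies
`8R₀⁵ (q(x) - 1/R₀) = (R₀² - x²)(7R₀² - 3x²) ≥ 0` for `|x| ≤ R₀`.
-/

/-- The glued warping function: the quartic
`(3/(8R₀⁵))x⁴ − (5/(4R₀³))x² + 15/(8R₀)` for `|x| ≤ R₀`, and `1/|x|` for `|x| ≥ R₀`. -/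
noncomputable def rho (R₀ : ℝ) : ℝ → ℝ := fun x =>
  if |x| ≤ R₀ then 3 / (8 * R₀ ^ 5) * x ^ 4 - 5 / (4 * R₀ ^ 3) * x ^ 2 + 15 / (8 * R₀)
  else 1 / |x|

open Set Filter Topology

section Glue

variable {F : Type*} [NormedAddCommGroup F] [NormedSpace ℝ F] {g h : ℝ → F} {a : ℝ}

theorem HasDerivAt.ite_le {d : F} (hg : HasDerivAt g d a) (hh : HasDerivAt h d a)
    (hgh : g a = h a) : HasDerivAt (fun x => if x ≤ a then g x else h x) d a := by
  have hleft : HasDerivWithinAt (fun x => if x ≤ a then g x else h x) d (Iic a) a :=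
    hg.hasDerivWithinAt.congr (fun x hx => if_pos hx) (if_pos le_rfl)
  have hright : HasDerivWithinAt (fun x => if x ≤ a then g x else h x) d (Ici a) a := by
    refine hh.hasDerivWithinAt.congr (fun x hx => ?_) (by simp [hgh])
    rcases (mem_Ici.mp hx).eq_or_lt with rfl | hx
    · simp [hgh]
    · exact if_neg hx.not_ge
  simpa [Iic_union_Ici] using hleft.union hright

theorem ContDiffOn.ite_le {U : Set ℝ} {n : ℕ} (hU : IsOpen U) (hg : ContDiffOn ℝ n g U)
    (hh : ContDiffOn ℝ n h U) (hjet : ∀ k ≤ n, iteratedDeriv k g a = iteratedDeriv k h a) :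
    ContDiffOn ℝ n (fun x => if x ≤ a then g x else h x) U := by
  induction n generalizing g h with
  | zero =>
    simp only [CharP.cast_eq_zero, contDiffOn_zero] at *
    refine ContinuousOn.if (fun x hx => ?_) (hg.mono inter_subset_left) (hh.mono inter_subset_left)
    obtain rfl : x = a := by simpa using (show x ∈ frontier (Iic a) from hx.2)
    simpa using hjet 0 le_rfl
  | succ n ih =>
    have hgd : ∀ x ∈ U, HasDerivAt g (deriv g x) x := fun x hx =>
      ((hg.differentiableOn (by simp)).differentiableAt (hU.mem_nhds hx)).hasDerivAt
    have hhd : ∀ x ∈ U, HasDerivAt h (deriv h x) x := fun x hx =>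
      ((hh.differentiableOn (by simp)).differentiableAt (hU.mem_nhds hx)).hasDerivAt
    have hderiv : ∀ x ∈ U, HasDerivAt (fun x => if x ≤ a then g x else h x)
        (if x ≤ a then deriv g x else deriv h x) x := by
      intro x hx
      rcases lt_trichotomy x a with hxa | rfl | hxa
      · rw [if_pos hxa.le]
        exact (hgd x hx).congr_of_eventuallyEq
          ((eventually_lt_nhds hxa).mono fun y hy => if_pos hy.le)
      · rw [if_pos le_rfl]
        refine (hgd x hx).ite_le ?_ (by simpa using hjet 0 (by simp))
        rw [show deriv g x = deriv h x by simpa using hjet 1 (by simp)]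
        exact hhd x hx
      · rw [if_neg hxa.not_ge]
        exact (hhd x hx).congr_of_eventuallyEq
          ((eventually_gt_nhds hxa).mono fun y hy => if_neg hy.not_ge)
    rw [Nat.cast_succ, contDiffOn_succ_iff_deriv_of_isOpen hU]
    refine ⟨fun x hx => (hderiv x hx).differentiableAt.differentiableWithinAt, by simp, ?_⟩
    refine (ih (hg.deriv_of_isOpen hU le_rfl) (hh.deriv_of_isOpen hU le_rfl) fun k hk => ?_).congr
      fun x hx => (hderiv x hx).deriv
    simpa [iteratedDeriv_succ'] using hjet (k + 1) (by omega)

end Glue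

noncomputable def rhoQuartic (R₀ : ℝ) : ℝ → ℝ := fun x =>
  3 / (8 * R₀ ^ 5) * x ^ 4 - 5 / (4 * R₀ ^ 3) * x ^ 2 + 15 / (8 * R₀)

section Rho

variable {R₀ : ℝ}

theorem contDiff_rhoQuartic {n : WithTop ℕ∞} : ContDiff ℝ n (rhoQuartic R₀) := by
  unfold rhoQuartic; fun_prop

theorem deriv_rhoQuartic :
    deriv (rhoQuartic R₀) = fun x => 3 / (2 * R₀ ^ 5) * x ^ 3 - 5 / (2 * R₀ ^ 3) * x := by
  ext x
  exact ((((hasDerivAt_pow 4 x).const_mul (3 / (8 * R₀ ^ 5))).sub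
    ((hasDerivAt_pow 2 x).const_mul (5 / (4 * R₀ ^ 3)))).add_const (15 / (8 * R₀))).deriv.trans
    (by push_cast; ring)

theorem deriv_deriv_rhoQuartic :
    deriv (deriv (rhoQuartic R₀)) = fun x => 9 / (2 * R₀ ^ 5) * x ^ 2 - 5 / (2 * R₀ ^ 3) := by
  ext x
  rw [deriv_rhoQuartic]
  exact (((hasDerivAt_pow 3 x).const_mul (3 / (2 * R₀ ^ 5))).sub
    ((hasDerivAt_id x).const_mul (5 / (2 * R₀ ^ 3)))).deriv.trans (by push_cast; ring)

theorem iteratedDeriv_rhoQuartic_eq_inv (hR₀ : 0 < R₀) :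
    ∀ k ≤ 2, iteratedDeriv k (rhoQuartic R₀) R₀ = iteratedDeriv k Inv.inv R₀ := by
  intro k hk
  rw [iteratedDeriv_eq_iterate (f := Inv.inv), iter_deriv_inv]
  interval_cases k
  · rw [iteratedDeriv_zero]; norm_num [rhoQuartic]; field_simp; ring
  · rw [iteratedDeriv_one, deriv_rhoQuartic]; norm_num [zpow_neg]; field_simp; ring
  · rw [iteratedDeriv_succ, iteratedDeriv_one, deriv_deriv_rhoQuartic]; norm_num [zpow_neg]
    field_simp; ring

theorem inv_le_rhoQuartic (hR₀ : 0 < R₀) {x : ℝ} (hx : |x| ≤ R₀) : R₀⁻¹ ≤ rhoQuartic R₀ x := by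
  have hx2 : x ^ 2 ≤ R₀ ^ 2 := sq_le_sq' (abs_le.mp hx).1 (abs_le.mp hx).2
  have key : rhoQuartic R₀ x - R₀⁻¹ =
      (R₀ ^ 2 - x ^ 2) * (7 * R₀ ^ 2 - 3 * x ^ 2) / (8 * R₀ ^ 5) := by
    unfold rhoQuartic; field_simp; ring
  rw [← sub_nonneg, key]
  exact div_nonneg (mul_nonneg (by linarith) (by nlinarith)) (by positivity)

theorem rho_pos (hR₀ : 0 < R₀) (x : ℝ) : 0 < rho R₀ x := by
  by_cases hx : |x| ≤ R₀
  · simp only [rho, if_pos hx]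
    exact (inv_pos.2 hR₀).trans_le (inv_le_rhoQuartic hR₀ hx)
  · simp only [rho, if_neg hx]
    exact one_div_pos.2 (hR₀.trans (not_le.1 hx))

theorem rho_neg (x : ℝ) : rho R₀ (-x) = rho R₀ x := by
  simp [rho, Even.neg_pow (by decide : Even 4)]

theorem rho_eqOn_Ioi :
    EqOn (rho R₀) (fun x => if x ≤ R₀ then rhoQuartic R₀ x else x⁻¹) (Ioi 0) := by
  intro x hx
  simp only [rho, abs_of_pos (mem_Ioi.mp hx), one_div]
  rfl

theorem contDiffOn_rho_Ioi (hR₀ : 0 < R₀) : ContDiffOn ℝ 2 (rho R₀) (Ioi 0) :=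
  (contDiff_rhoQuartic.contDiffOn.ite_le isOpen_Ioi
    ((contDiffOn_inv ℝ).mono fun _ hx => ne_of_gt hx) (iteratedDeriv_rhoQuartic_eq_inv hR₀)).congr
    rho_eqOn_Ioi

theorem contDiffAt_rho (hR₀ : 0 < R₀) (x : ℝ) : ContDiffAt ℝ 2 (rho R₀) x := by
  rcases lt_trichotomy x 0 with hx | rfl | hx
  · rw [show rho R₀ = fun y => rho R₀ (-y) from funext fun y => (rho_neg y).symm]
    exact ((contDiffOn_rho_Ioi hR₀).contDiffAt (Ioi_mem_nhds (neg_pos.2 hx))).comp x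
      contDiff_neg.contDiffAt
  · have : rho R₀ =ᶠ[𝓝 0] rhoQuartic R₀ :=
      eventually_of_mem (Ioo_mem_nhds (neg_neg_of_pos hR₀) hR₀) fun y hy =>
        if_pos (abs_le.mpr ⟨hy.1.le, hy.2.le⟩)
    exact contDiff_rhoQuartic.contDiffAt.congr_of_eventuallyEq this
  · exact (contDiffOn_rho_Ioi hR₀).contDiffAt (Ioi_mem_nhds hx)

end Rho

/-- The glued warping function `ρ` is of class `C²` and everywhere positive. -/
theorem rho_contDiff_and_pos (R₀ : ℝ) (hR₀ : 0 < R₀) :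
    ContDiff ℝ 2 (rho R₀) ∧ ∀ x : ℝ, 0 < rho R₀ x :=
  ⟨contDiff_iff_contDiffAt.2 (contDiffAt_rho hR₀), rho_pos hR₀⟩
end

section
/- Fix R₀ ≥ 100 and define ρ : ℝ → ℝ by ρ(x) = (3/(8R₀⁵))·x⁴ − (5/(4R₀³))·x² + 15/(8R₀) for |x| ≤ R₀, and ρ(x) = 1/|x| for |x| ≥ R₀ (a positive C² function). Then for every x ∈ ℝ, −4·ρ″(x)/ρ(x) + (2 − 2·ρ′(x)²)/ρ(x)² > 1. -/
/-!
The curvature expression only involves `ρ`, `ρ′²` and `ρ″`, so it is even in `x` because `ρ` is,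
and it suffices to treat `x ≥ 0`. The quartic cap and `1/x` agree at `R₀` to second order
(`ρ = 1/R₀`, `ρ′ = -1/R₀²`, `ρ″ = 2/R₀³`), so both derivatives of `ρ` at `R₀` are obtained by gluing
one-sided derivatives. For `x ≥ R₀` the curvature is exactly `2x² - 10/x²`. On the cap,
`1/R₀ ≤ ρ ≤ 15/(8R₀)`, `ρ″ ≤ 2/R₀³` and `ρ′² ≤ 1/2`, which bounds the curvature below by
`64R₀²/225 - 8/R₀²`.
-/

open Filter Set Topology

noncomputable section

theorem hasDerivAt_of_nhdsLE_of_eqOn_Ici {f g h h' : ℝ → ℝ} {a x : ℝ}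
    (hg : HasDerivAt g (h' a) a) (hh : HasDerivAt h (h' x) x) (hfg : f =ᶠ[𝓝[≤] a] g)
    (hfh : EqOn f h (Ici a)) (hx : a ≤ x) : HasDerivAt f (h' x) x := by
  rcases hx.eq_or_lt with rfl | hlt
  · have hglued := (hg.hasDerivWithinAt.congr_of_eventuallyEq_of_mem hfg self_mem_Iic).union
      (hh.hasDerivWithinAt.congr_of_mem hfh self_mem_Ici)
    rwa [Iic_union_Ici, hasDerivWithinAt_univ] at hglued
  · exact hh.congr_of_eventuallyEq <|
      eventuallyEq_of_mem (Ioi_mem_nhds hlt) (hfh.mono Ioi_subset_Ici_self)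

theorem Function.Even.deriv {f : ℝ → ℝ} (hf : f.Even) : (deriv f).Odd := fun x => by
  simpa [hf _] using deriv_comp_neg f (-x)

theorem Function.Odd.deriv {f : ℝ → ℝ} (hf : f.Odd) : (deriv f).Even := fun x => by
  simpa [hf _] using deriv_comp_neg f (-x)

/-- The scalar curvature of the warped product `dr² + ρ(r)² ds₂²` on `ℝ × S²`. -/
def warpedScalarCurvature (ρ : ℝ → ℝ) (x : ℝ) : ℝ :=
  -4 * deriv (deriv ρ) x / ρ x + (2 - 2 * (deriv ρ x) ^ 2) / (ρ x) ^ 2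

theorem warpedScalarCurvature_abs {ρ : ℝ → ℝ} (hρ : ρ.Even) (x : ℝ) :
    warpedScalarCurvature ρ |x| = warpedScalarCurvature ρ x := by
  rcases abs_choice x with h | h
  · rw [h]
  · rw [h, warpedScalarCurvature, warpedScalarCurvature, hρ, hρ.deriv, hρ.deriv.deriv, neg_sq]

theorem le_warpedScalarCurvature {ρ : ℝ → ℝ} {x a b c : ℝ} (ha : 0 < a) (haρ : a ≤ ρ x)
    (hρb : ρ x ≤ b) (hc : 0 ≤ c) (hρ'' : deriv (deriv ρ) x ≤ c) (hρ' : deriv ρ x ^ 2 ≤ 1 / 2) :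
    -4 * c / a + 1 / b ^ 2 ≤ warpedScalarCurvature ρ x := by
  have hρ : 0 < ρ x := ha.trans_le haρ
  have hcurv : -4 * c / a ≤ -4 * deriv (deriv ρ) x / ρ x := by
    rw [neg_mul, neg_mul, neg_div, neg_div, neg_le_neg_iff]
    calc 4 * deriv (deriv ρ) x / ρ x ≤ 4 * c / ρ x := by gcongr
      _ ≤ 4 * c / a := by gcongr
  have hsphere : 1 / b ^ 2 ≤ (2 - 2 * deriv ρ x ^ 2) / ρ x ^ 2 :=
    calc 1 / b ^ 2 ≤ 1 / ρ x ^ 2 := by gcongr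
      _ ≤ (2 - 2 * deriv ρ x ^ 2) / ρ x ^ 2 := by gcongr; linarith
  exact add_le_add hcurv hsphere

section rho

variable {R₀ x : ℝ}

def rhoInner (R₀ x : ℝ) : ℝ := 3 / (8 * R₀ ^ 5) * x ^ 4 - 5 / (4 * R₀ ^ 3) * x ^ 2 + 15 / (8 * R₀)

def rhoInnerDeriv (R₀ x : ℝ) : ℝ := 3 / (2 * R₀ ^ 5) * x ^ 3 - 5 / (2 * R₀ ^ 3) * x

def rhoInnerDeriv2 (R₀ x : ℝ) : ℝ := 9 / (2 * R₀ ^ 5) * x ^ 2 - 5 / (2 * R₀ ^ 3)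

theorem hasDerivAt_rhoInner : HasDerivAt (rhoInner R₀) (rhoInnerDeriv R₀ x) x :=
  ((((hasDerivAt_pow 4 x).const_mul (3 / (8 * R₀ ^ 5))).sub
    ((hasDerivAt_pow 2 x).const_mul (5 / (4 * R₀ ^ 3)))).add_const (15 / (8 * R₀))).congr_deriv
    (by simp only [rhoInnerDeriv]; norm_num; ring)

theorem hasDerivAt_rhoInnerDeriv : HasDerivAt (rhoInnerDeriv R₀) (rhoInnerDeriv2 R₀ x) x :=
  (((hasDerivAt_pow 3 x).const_mul (3 / (2 * R₀ ^ 5))).sub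
    ((hasDerivAt_id x).const_mul (5 / (2 * R₀ ^ 3)))).congr_deriv
    (by simp only [rhoInnerDeriv2]; norm_num; ring)

theorem hasDerivAt_neg_inv_sq (hx : x ≠ 0) :
    HasDerivAt (fun y : ℝ => -(y ^ 2)⁻¹) (2 / x ^ 3) x :=
  ((hasDerivAt_pow 2 x).inv (pow_ne_zero 2 hx)).neg.congr_deriv (by field_simp; ring)

theorem rho_even (R₀ : ℝ) : (rho R₀).Even := fun x => by
  simp only [rho, abs_neg, even_two.neg_pow, Even.neg_pow (by decide : Even 4)]

theorem rho_of_abs_le (h : |x| ≤ R₀) : rho R₀ x = rhoInner R₀ x := if_pos h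

theorem rho_of_le (hR : 0 < R₀) (h : R₀ ≤ x) : rho R₀ x = x⁻¹ := by
  rcases h.eq_or_lt with rfl | hlt
  · rw [rho_of_abs_le (abs_of_pos hR).le, rhoInner]
    field_simp; ring
  · have hx : |x| = x := abs_of_pos (hR.trans hlt)
    rw [rho, if_neg (by rw [hx]; exact hlt.not_ge), hx, one_div]

theorem rho_eventuallyEq_of_abs_lt (h : |x| < R₀) : rho R₀ =ᶠ[𝓝 x] rhoInner R₀ :=
  eventuallyEq_of_mem (Ioo_mem_nhds (abs_lt.1 h).1 (abs_lt.1 h).2) fun _ hy =>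
    rho_of_abs_le (abs_lt.2 hy).le

theorem rho_eventuallyEq_nhdsLE (hR : 0 < R₀) : rho R₀ =ᶠ[𝓝[≤] R₀] rhoInner R₀ :=
  eventuallyEq_of_mem (Ioc_mem_nhdsLE (by linarith)) fun _ hy =>
    rho_of_abs_le (abs_le.2 ⟨hy.1.le, hy.2⟩)

theorem deriv_rho_of_abs_lt (h : |x| < R₀) : deriv (rho R₀) x = rhoInnerDeriv R₀ x := by
  rw [(rho_eventuallyEq_of_abs_lt h).deriv_eq, hasDerivAt_rhoInner.deriv]

theorem deriv_rho_of_le (hR : 0 < R₀) (h : R₀ ≤ x) : deriv (rho R₀) x = -(x ^ 2)⁻¹ := by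
  refine (hasDerivAt_of_nhdsLE_of_eqOn_Ici (h' := fun y => -(y ^ 2)⁻¹) ?_ (hasDerivAt_inv ?_)
    (rho_eventuallyEq_nhdsLE hR) (fun y hy => rho_of_le hR hy) h).deriv
  · convert hasDerivAt_rhoInner using 1
    simp only [rhoInnerDeriv]; field_simp; ring
  · linarith

theorem deriv_rho_eqOn_Ioc (hR : 0 < R₀) :
    EqOn (deriv (rho R₀)) (rhoInnerDeriv R₀) (Ioc (-R₀) R₀) := by
  intro y hy
  rcases hy.2.lt_or_eq with hlt | rfl
  · exact deriv_rho_of_abs_lt (abs_lt.2 ⟨hy.1, hlt⟩)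
  · rw [deriv_rho_of_le hR le_rfl, rhoInnerDeriv]
    field_simp; ring

theorem deriv_deriv_rho_of_abs_lt (hR : 0 < R₀) (h : |x| < R₀) :
    deriv (deriv (rho R₀)) x = rhoInnerDeriv2 R₀ x := by
  have hloc : deriv (rho R₀) =ᶠ[𝓝 x] rhoInnerDeriv R₀ :=
    eventuallyEq_of_mem (Ioo_mem_nhds (abs_lt.1 h).1 (abs_lt.1 h).2)
      ((deriv_rho_eqOn_Ioc hR).mono Ioo_subset_Ioc_self)
  rw [hloc.deriv_eq, hasDerivAt_rhoInnerDeriv.deriv]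

theorem deriv_deriv_rho_of_le (hR : 0 < R₀) (h : R₀ ≤ x) :
    deriv (deriv (rho R₀)) x = 2 / x ^ 3 := by
  refine (hasDerivAt_of_nhdsLE_of_eqOn_Ici (h' := fun y => 2 / y ^ 3) (g := rhoInnerDeriv R₀) ?_
    (hasDerivAt_neg_inv_sq ?_) ?_ (fun y hy => deriv_rho_of_le hR hy) h).deriv
  · convert hasDerivAt_rhoInnerDeriv using 1
    simp only [rhoInnerDeriv2]; field_simp; ring
  · linarith
  · exact eventuallyEq_of_mem (Ioc_mem_nhdsLE (by linarith)) (deriv_rho_eqOn_Ioc hR)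

theorem rhoInner_eq (hR : R₀ ≠ 0) :
    rhoInner R₀ x = (3 * x ^ 4 - 10 * R₀ ^ 2 * x ^ 2 + 15 * R₀ ^ 4) / (8 * R₀ ^ 5) := by
  rw [rhoInner]; field_simp; ring

theorem inv_le_rhoInner (hR : 0 < R₀) (h : |x| ≤ R₀) : R₀⁻¹ ≤ rhoInner R₀ x := by
  have hx : x ^ 2 ≤ R₀ ^ 2 := sq_le_sq.2 (by rwa [abs_of_pos hR])
  rw [rhoInner_eq hR.ne', le_div_iff₀ (by positivity)]
  field_simp
  nlinarith [mul_nonneg (sub_nonneg.2 hx) (by nlinarith : 0 ≤ 7 * R₀ ^ 2 - 3 * x ^ 2)]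

theorem rhoInner_le (hR : 0 < R₀) (h : |x| ≤ R₀) : rhoInner R₀ x ≤ 15 / (8 * R₀) := by
  have hx : x ^ 2 ≤ R₀ ^ 2 := sq_le_sq.2 (by rwa [abs_of_pos hR])
  rw [rhoInner_eq hR.ne', div_le_div_iff₀ (by positivity) (by positivity)]
  nlinarith [mul_nonneg (sq_nonneg x) (sub_nonneg.2 hx), pow_pos hR 4]

theorem rhoInnerDeriv_sq_le (hR : 2 ≤ R₀) (h : |x| ≤ R₀) : rhoInnerDeriv R₀ x ^ 2 ≤ 1 / 2 := by
  have hR0 : 0 < R₀ := by linarith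
  have hx : x ^ 2 ≤ R₀ ^ 2 := sq_le_sq.2 (by rwa [abs_of_pos hR0])
  have : rhoInnerDeriv R₀ x ^ 2 = x ^ 2 * (3 * x ^ 2 - 5 * R₀ ^ 2) ^ 2 / (4 * R₀ ^ 10) := by
    rw [rhoInnerDeriv]; field_simp; ring
  have hfactor : (3 * x ^ 2 - 5 * R₀ ^ 2) ^ 2 ≤ (5 * R₀ ^ 2) ^ 2 :=
    sq_le_sq' (by nlinarith [sq_nonneg x]) (by nlinarith)
  have hR4 : 16 ≤ R₀ ^ 4 := by nlinarith [pow_le_pow_left₀ (by norm_num : (0 : ℝ) ≤ 2) hR 4]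
  rw [this, div_le_iff₀ (by positivity)]
  calc x ^ 2 * (3 * x ^ 2 - 5 * R₀ ^ 2) ^ 2 ≤ R₀ ^ 2 * (5 * R₀ ^ 2) ^ 2 :=
        mul_le_mul hx hfactor (sq_nonneg _) (sq_nonneg _)
    _ ≤ 1 / 2 * (4 * R₀ ^ 10) := by nlinarith [pow_pos hR0 6]

theorem rhoInnerDeriv2_le (hR : 0 < R₀) (h : |x| ≤ R₀) : rhoInnerDeriv2 R₀ x ≤ 2 / R₀ ^ 3 := by
  have hx : x ^ 2 ≤ R₀ ^ 2 := sq_le_sq.2 (by rwa [abs_of_pos hR])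
  calc rhoInnerDeriv2 R₀ x ≤ 9 / (2 * R₀ ^ 5) * R₀ ^ 2 - 5 / (2 * R₀ ^ 3) := by
        rw [rhoInnerDeriv2]; gcongr
    _ = 2 / R₀ ^ 3 := by field_simp; ring

theorem one_lt_warpedScalarCurvature_rho_of_abs_lt (hR : 100 ≤ R₀) (h : |x| < R₀) :
    1 < warpedScalarCurvature (rho R₀) x := by
  have hR0 : 0 < R₀ := by linarith
  refine lt_of_lt_of_le ?_ (le_warpedScalarCurvature (a := R₀⁻¹) (b := 15 / (8 * R₀))
    (c := 2 / R₀ ^ 3) (by positivity) ?_ ?_ (by positivity) ?_ ?_)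
  · have hbound : -4 * (2 / R₀ ^ 3) / R₀⁻¹ + 1 / (15 / (8 * R₀)) ^ 2 =
        64 / 225 * R₀ ^ 2 - 8 / R₀ ^ 2 := by
      field_simp; ring
    rw [hbound]
    have : 8 / R₀ ^ 2 ≤ 1 := by rw [div_le_one (by positivity)]; nlinarith
    nlinarith
  · rw [rho_of_abs_le h.le]; exact inv_le_rhoInner hR0 h.le
  · rw [rho_of_abs_le h.le]; exact rhoInner_le hR0 h.le
  · rw [deriv_deriv_rho_of_abs_lt hR0 h]; exact rhoInnerDeriv2_le hR0 h.le
  · rw [deriv_rho_of_abs_lt h]; exact rhoInnerDeriv_sq_le (by linarith) h.le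

theorem one_lt_warpedScalarCurvature_rho_of_le (hR : 100 ≤ R₀) (h : R₀ ≤ x) :
    1 < warpedScalarCurvature (rho R₀) x := by
  have hR0 : 0 < R₀ := by linarith
  have hx : 0 < x := by linarith
  have hcurv : warpedScalarCurvature (rho R₀) x = 2 * x ^ 2 - 10 / x ^ 2 := by
    rw [warpedScalarCurvature, rho_of_le hR0 h, deriv_rho_of_le hR0 h, deriv_deriv_rho_of_le hR0 h]
    field_simp; ring
  have : 10 / x ^ 2 ≤ 1 := by rw [div_le_one (by positivity)]; nlinarith
  rw [hcurv]; nlinarith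

end rho

end

/-- For `R₀ ≥ 100`, the scalar curvature `R = −4ρ″/ρ + (2 − 2ρ′²)/ρ²` of the warped
product metric `dr² + ρ(r)² ds₂²` on `ℝ × S²` is everywhere greater than `1`. -/
theorem rho_scalar_curvature_gt_one (R₀ : ℝ) (hR₀ : 100 ≤ R₀) :
    ∀ x : ℝ,
      1 < -4 * deriv (deriv (rho R₀)) x / rho R₀ x +
            (2 - 2 * (deriv (rho R₀) x) ^ 2) / (rho R₀ x) ^ 2 := by
  intro x
  show 1 < warpedScalarCurvature (rho R₀) x
  rw [← warpedScalarCurvature_abs (rho_even R₀)]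
  rcases lt_or_ge |x| R₀ with h | h
  · exact one_lt_warpedScalarCurvature_rho_of_abs_lt hR₀ (by rwa [abs_abs])
  · exact one_lt_warpedScalarCurvature_rho_of_le hR₀ h
end

section
/- Fix R₀ ≥ 100 and define ρ : ℝ → ℝ by ρ(x) = (3/(8R₀⁵))·x⁴ − (5/(4R₀³))·x² + 15/(8R₀) for |x| ≤ R₀, and ρ(x) = 1/|x| for |x| ≥ R₀ (a positive C² function). Then for every x ∈ ℝ, both −ρ″(x)/ρ(x) ≥ −2/R₀² and (1 − ρ′(x)²)/ρ(x)² ≥ −2/R₀². -/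
theorem sign_eq_div_abs {α : Type*} [Field α] [LinearOrder α] [IsStrictOrderedRing α] (x : α) :
    (SignType.sign x : α) = x / |x| := by
  rcases eq_or_ne x 0 with rfl | hx
  · simp
  · exact eq_div_of_mul_eq (abs_ne_zero.2 hx) (sign_mul_abs x)

theorem hasDerivAt_one_div_abs {x : ℝ} (hx : x ≠ 0) :
    HasDerivAt (fun y => 1 / |y|) (-x / |x| ^ 3) x := by
  have habs : |x| ≠ 0 := abs_ne_zero.2 hx
  refine ((hasDerivAt_const x (1 : ℝ)).fun_div (hasDerivAt_abs hx) habs).congr_deriv ?_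
  rw [sign_eq_div_abs]
  field_simp
  ring

theorem hasDerivAt_neg_div_abs_pow_three {x : ℝ} (hx : x ≠ 0) :
    HasDerivAt (fun y => -y / |y| ^ 3) (2 / |x| ^ 3) x := by
  have habs : |x| ≠ 0 := abs_ne_zero.2 hx
  refine ((hasDerivAt_neg x).fun_div ((hasDerivAt_abs hx).fun_pow 3)
    (pow_ne_zero 3 habs)).congr_deriv ?_
  rw [sign_eq_div_abs]
  field_simp
  rw [← sq_abs x]
  ring

theorem hasDerivAt_of_eq_on_abs_le_of_eq_on_le_abs {f p o : ℝ → ℝ} {p' o' R x : ℝ}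
    (hfp : ∀ y, |y| ≤ R → f y = p y) (hfo : ∀ y, R ≤ |y| → f y = o y)
    (hp : |x| ≤ R → HasDerivAt p p' x) (ho : R ≤ |x| → HasDerivAt o o' x)
    (hder : |x| = R → p' = o') :
    HasDerivAt f (if |x| ≤ R then p' else o') x := by
  have inner (hx : |x| ≤ R) : HasDerivWithinAt f p' {y | |y| ≤ R} x :=
    (hp hx).hasDerivWithinAt.congr hfp (hfp x hx)
  have outer (hx : R ≤ |x|) : HasDerivWithinAt f o' {y | R ≤ |y|} x :=
    (ho hx).hasDerivWithinAt.congr hfo (hfo x hx)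
  rcases lt_trichotomy |x| R with h | h | h
  · rw [if_pos h.le]
    exact (inner h.le).hasDerivAt <|
      (continuous_abs.continuousAt.eventually_lt continuousAt_const h).mono fun _ => le_of_lt
  · rw [if_pos h.le]
    have hunion := (inner h.le).union (hder h ▸ outer h.ge)
    have hcover : {y : ℝ | |y| ≤ R} ∪ {y | R ≤ |y|} = Set.univ :=
      Set.eq_univ_of_forall fun y => le_total |y| R
    rwa [hcover, hasDerivWithinAt_univ] at hunion
  · rw [if_neg h.not_ge]
    exact (outer h.le).hasDerivAt <|
      (continuousAt_const.eventually_lt continuous_abs.continuousAt h).mono fun _ => le_of_lt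

noncomputable def rhoDeriv (R : ℝ) : ℝ → ℝ := fun x =>
  if |x| ≤ R then 3 / (2 * R ^ 5) * x ^ 3 - 5 / (2 * R ^ 3) * x else -x / |x| ^ 3

noncomputable def rhoDeriv2 (R : ℝ) : ℝ → ℝ := fun x =>
  if |x| ≤ R then 9 / (2 * R ^ 5) * x ^ 2 - 5 / (2 * R ^ 3) else 2 / |x| ^ 3

section

variable {R : ℝ}

theorem rho_of_abs_le_s10 {x : ℝ} (hx : |x| ≤ R) :
    rho R x = 3 / (8 * R ^ 5) * x ^ 4 - 5 / (4 * R ^ 3) * x ^ 2 + 15 / (8 * R) :=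
  if_pos hx

theorem rho_of_le_abs (hR : 0 < R) {x : ℝ} (hx : R ≤ |x|) : rho R x = 1 / |x| := by
  by_cases hin : |x| ≤ R
  · have hxR : |x| = R := le_antisymm hin hx
    have hx2 : x ^ 2 = R ^ 2 := by rw [← sq_abs, hxR]
    rw [rho_of_abs_le_s10 hin, hxR]
    field_simp
    linear_combination (12 * x ^ 2 - 28 * R ^ 2) * hx2
  · exact if_neg hin

theorem rhoDeriv_of_abs_le {x : ℝ} (hx : |x| ≤ R) :
    rhoDeriv R x = 3 / (2 * R ^ 5) * x ^ 3 - 5 / (2 * R ^ 3) * x :=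
  if_pos hx

theorem rhoDeriv_of_le_abs (hR : 0 < R) {x : ℝ} (hx : R ≤ |x|) :
    rhoDeriv R x = -x / |x| ^ 3 := by
  by_cases hin : |x| ≤ R
  · have hxR : |x| = R := le_antisymm hin hx
    have hx2 : x ^ 2 = R ^ 2 := by rw [← sq_abs, hxR]
    rw [rhoDeriv_of_abs_le hin, hxR]
    field_simp
    linear_combination 3 * x * hx2
  · exact if_neg hin

theorem rhoDeriv2_of_abs_le {x : ℝ} (hx : |x| ≤ R) :
    rhoDeriv2 R x = 9 / (2 * R ^ 5) * x ^ 2 - 5 / (2 * R ^ 3) :=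
  if_pos hx

theorem rhoDeriv2_of_le_abs (hR : 0 < R) {x : ℝ} (hx : R ≤ |x|) :
    rhoDeriv2 R x = 2 / |x| ^ 3 := by
  by_cases hin : |x| ≤ R
  · have hxR : |x| = R := le_antisymm hin hx
    have hx2 : x ^ 2 = R ^ 2 := by rw [← sq_abs, hxR]
    rw [rhoDeriv2_of_abs_le hin, hxR]
    field_simp
    linear_combination 9 * hx2
  · exact if_neg hin

theorem hasDerivAt_rho (hR : 0 < R) (x : ℝ) : HasDerivAt (rho R) (rhoDeriv R x) x := by
  refine hasDerivAt_of_eq_on_abs_le_of_eq_on_le_abs (fun _ => rho_of_abs_le_s10)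
    (fun _ => rho_of_le_abs hR) (fun _ => ?_)
    (fun hx => hasDerivAt_one_div_abs (abs_pos.1 (hR.trans_le hx)))
    (fun hx => (rhoDeriv_of_abs_le hx.le).symm.trans (rhoDeriv_of_le_abs hR hx.ge))
  refine ((((hasDerivAt_pow 4 x).const_mul _).sub ((hasDerivAt_pow 2 x).const_mul _)).add_const
    (15 / (8 * R))).congr_deriv ?_
  push_cast
  ring

theorem hasDerivAt_rhoDeriv (hR : 0 < R) (x : ℝ) :
    HasDerivAt (rhoDeriv R) (rhoDeriv2 R x) x := by
  refine hasDerivAt_of_eq_on_abs_le_of_eq_on_le_abs (fun _ => rhoDeriv_of_abs_le)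
    (fun _ => rhoDeriv_of_le_abs hR) (fun _ => ?_)
    (fun hx => hasDerivAt_neg_div_abs_pow_three (abs_pos.1 (hR.trans_le hx)))
    (fun hx => (rhoDeriv2_of_abs_le hx.le).symm.trans (rhoDeriv2_of_le_abs hR hx.ge))
  refine (((hasDerivAt_pow 3 x).const_mul _).sub ((hasDerivAt_id x).const_mul _)).congr_deriv ?_
  push_cast
  ring

theorem rho_pos_s10 (hR : 0 < R) (x : ℝ) : 0 < rho R x := by
  rcases le_total |x| R with hx | hx
  · have hx2 : x ^ 2 ≤ R ^ 2 := sq_abs x ▸ pow_le_pow_left₀ (abs_nonneg x) hx 2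
    have hform :
        rho R x = ((R ^ 2 - x ^ 2) * (7 * R ^ 2 - 3 * x ^ 2) + 8 * R ^ 4) / (8 * R ^ 5) := by
      rw [rho_of_abs_le_s10 hx]
      field_simp
      ring
    rw [hform]
    have hprod : 0 ≤ (R ^ 2 - x ^ 2) * (7 * R ^ 2 - 3 * x ^ 2) :=
      mul_nonneg (by linarith) (by linarith [sq_nonneg R])
    positivity
  · rw [rho_of_le_abs hR hx]
    exact one_div_pos.2 (hR.trans_le hx)

theorem rhoDeriv2_le (hR : 0 < R) (x : ℝ) : rhoDeriv2 R x ≤ 2 / R ^ 2 * rho R x := by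
  rcases le_total |x| R with hx | hx
  · have hx2 : x ^ 2 ≤ R ^ 2 := sq_abs x ▸ pow_le_pow_left₀ (abs_nonneg x) hx 2
    have hgap : 2 / R ^ 2 * rho R x - rhoDeriv2 R x =
        (R ^ 2 - x ^ 2) * (25 * R ^ 2 - 3 * x ^ 2) / (4 * R ^ 7) := by
      rw [rho_of_abs_le_s10 hx, rhoDeriv2_of_abs_le hx]
      field_simp
      ring
    have hprod : 0 ≤ (R ^ 2 - x ^ 2) * (25 * R ^ 2 - 3 * x ^ 2) :=
      mul_nonneg (by linarith) (by linarith [sq_nonneg R])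
    have : 0 ≤ 2 / R ^ 2 * rho R x - rhoDeriv2 R x := hgap ▸ by positivity
    linarith
  · have hx0 : 0 < |x| := hR.trans_le hx
    rw [rho_of_le_abs hR hx, rhoDeriv2_of_le_abs hR hx, div_mul_div_comm, mul_one,
      div_le_div_iff₀ (by positivity) (by positivity)]
    have : R ^ 2 ≤ |x| ^ 2 := pow_le_pow_left₀ hR.le hx 2
    nlinarith

theorem rhoDeriv_sq_le_one (hR : 2 ≤ R) (x : ℝ) : rhoDeriv R x ^ 2 ≤ 1 := by
  have hR0 : 0 < R := by linarith
  rcases le_total |x| R with hx | hx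
  · have hx2 : x ^ 2 ≤ R ^ 2 := sq_abs x ▸ pow_le_pow_left₀ (abs_nonneg x) hx 2
    have hform : rhoDeriv R x ^ 2 = x ^ 2 * (5 * R ^ 2 - 3 * x ^ 2) ^ 2 / (4 * R ^ 10) := by
      rw [rhoDeriv_of_abs_le hx]
      field_simp
      ring
    have hfactor : (5 * R ^ 2 - 3 * x ^ 2) ^ 2 ≤ (5 * R ^ 2) ^ 2 :=
      pow_le_pow_left₀ (by linarith [sq_nonneg R]) (by linarith [sq_nonneg x]) 2
    have hR4 : 2 ^ 4 ≤ R ^ 4 := pow_le_pow_left₀ (by norm_num) hR 4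
    rw [hform, div_le_one (by positivity)]
    calc x ^ 2 * (5 * R ^ 2 - 3 * x ^ 2) ^ 2 ≤ R ^ 2 * (5 * R ^ 2) ^ 2 :=
          mul_le_mul hx2 hfactor (sq_nonneg _) (sq_nonneg _)
      _ ≤ 4 * R ^ 10 := by nlinarith [pow_pos hR0 6]
  · have hx1 : 1 ≤ |x| := by linarith
    rw [rhoDeriv_of_le_abs hR0 hx, div_pow, neg_sq, ← sq_abs x, ← pow_mul,
      div_le_one (by positivity)]
    exact pow_le_pow_right₀ hx1 (by norm_num)

end

/-- For `R₀ ≥ 100`, both sectional curvature quantities `−ρ″/ρ` and `(1 − ρ′²)/ρ²` of the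
warped product metric `dr² + ρ(r)² ds₂²` are bounded below by `−2/R₀²`. -/
theorem rho_sectional_curvature_lower_bound (R₀ : ℝ) (hR₀ : 100 ≤ R₀) :
    ∀ x : ℝ,
      -2 / R₀ ^ 2 ≤ -(deriv (deriv (rho R₀)) x) / rho R₀ x ∧
      -2 / R₀ ^ 2 ≤ (1 - (deriv (rho R₀) x) ^ 2) / (rho R₀ x) ^ 2 := by
  intro x
  have hR : 0 < R₀ := by linarith
  have hρ' : deriv (rho R₀) = rhoDeriv R₀ := funext fun y => (hasDerivAt_rho hR y).deriv
  have hρ'' : deriv (rhoDeriv R₀) x = rhoDeriv2 R₀ x := (hasDerivAt_rhoDeriv hR x).deriv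
  rw [hρ', hρ'']
  constructor
  · rw [neg_div, neg_div, neg_le_neg_iff, div_le_iff₀ (rho_pos_s10 hR x)]
    exact rhoDeriv2_le hR x
  · calc -2 / R₀ ^ 2 ≤ 0 := div_nonpos_of_nonpos_of_nonneg (by norm_num) (sq_nonneg _)
      _ ≤ _ := div_nonneg (sub_nonneg.2 (rhoDeriv_sq_le_one (by linarith) x)) (sq_nonneg _)
end
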